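/- Let λ ∈ ℝ with λ ≠ 0. Then the stabilizer {U ∈ SU(5) : Uᵀ σ(λ, λ) U = σ(λ, λ)} consists exactly of the block-diagonal matrices diag(V, 1) where V is a 4×4 complex unitary matrix satisfying Vᵀ J V = J, with J = (E'_{12} − E'_{21}) + (E'_{34} − E'_{43}) the standard 4×4 symplectic form (E'_{ij} the 4×4 matrix units); that is, the stabilizer of σ(λ, λ) in SU(5) is isomorphic to the compact symplectic group Sp(2) = U(4) ∩ Sp(4, ℂ). -/

import Mathlib

noncomputable section

open Matrix

/-- The antisymmetric `5×5` matrix `σ(λ, μ)` representing the 2-form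
`λ e¹∧e² + μ e³∧e⁴` on `ℂ⁵`. -/
def sigmaForm (lam mu : ℝ) : Matrix (Fin 5) (Fin 5) ℂ :=
  (lam : ℂ) • (single 0 1 1 - single 1 0 1) +
    (mu : ℂ) • (single 2 3 1 - single 3 2 1)

/-- The standard `4×4` symplectic form `J = (E₁₂ − E₂₁) + (E₃₄ − E₄₃)`. -/
def J4 : Matrix (Fin 4) (Fin 4) ℂ :=
  (single 0 1 1 - single 1 0 1) + (single 2 3 1 - single 3 2 1)

/-- The block-diagonal matrix `diag(V, 1)` with `V` of size `4×4`. -/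
def blockDiag41 (V : Matrix (Fin 4) (Fin 4) ℂ) : Matrix (Fin 5) (Fin 5) ℂ := fun i j =>
  if hi : (i : ℕ) < 4 then
    (if hj : (j : ℕ) < 4 then V ⟨(i : ℕ), hi⟩ ⟨(j : ℕ), hj⟩ else 0)
  else if (j : ℕ) < 4 then 0 else 1

/-!
With respect to `ℂ⁵ = ℂ⁴ ⊕ ℂ`, `σ(λ, λ) = diag(λJ, 0)`. For unitary `U` one has `(Uᵀ)⁻¹ = Ū`, so
`Uᵀ σ U = σ` says `σ U = Ū σ`; comparing the off-diagonal blocks and using that `λJ` is invertible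
shows that both off-diagonal blocks of `U` vanish. Hence `U = diag(V, c)` with `Vᵀ J V = J`, and
since symplectic matrices have determinant one, `det U = 1` forces `c = 1`.
-/

namespace Matrix

section Reindex

variable {ι κ K : Type*} [Fintype ι] [Fintype κ]

lemma transpose_reindex_mul_mul [CommSemiring K] (e : ι ≃ κ) (W Ω : Matrix ι ι K) :
    (reindex e e W)ᵀ * reindex e e Ω * reindex e e W = reindex e e (Wᵀ * Ω * W) := by
  simp

lemma reindex_mem_unitaryGroup_iff [DecidableEq ι] [DecidableEq κ] [CommRing K] [StarRing K]
    (e : ι ≃ κ) {W : Matrix ι ι K} :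
    reindex e e W ∈ unitaryGroup κ K ↔ W ∈ unitaryGroup ι K := by
  rw [mem_unitaryGroup_iff', mem_unitaryGroup_iff', ← (reindex e e).injective.eq_iff]
  simp [star_eq_conjTranspose, submatrix_mul_equiv]

end Reindex

lemma det_eq_one_of_transpose_mul_reindex_J_mul_eq {l ι R : Type*} [Fintype l] [DecidableEq l]
    [Fintype ι] [DecidableEq ι] [CommRing R] (e : l ⊕ l ≃ ι) {V : Matrix ι ι R}
    (h : Vᵀ * reindex e e (J l R) * V = reindex e e (J l R)) : V.det = 1 := by
  have hV : reindex e.symm e.symm V ∈ symplecticGroup l R := by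
    rw [SymplecticGroup.mem_iff', ← (reindex e e).injective.eq_iff, ← transpose_reindex_mul_mul]
    simpa using h
  rw [← det_reindex_self e.symm]
  exact SymplecticGroup.det_eq_one hV

section Blocks

variable {ι m n K : Type*} [Fintype ι] [Fintype m] [Fintype n]

lemma transpose_fromBlocks_mul_fromBlocks_mul_fromBlocks [CommRing K] (A Ω : Matrix m m K)
    (D : Matrix n n K) :
    (fromBlocks A 0 0 D)ᵀ * fromBlocks Ω 0 0 0 * fromBlocks A 0 0 D =
      fromBlocks (Aᵀ * Ω * A) 0 0 0 := by
  simp [fromBlocks_transpose, fromBlocks_multiply]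

lemma transpose_mul_smul_mul_eq_smul_iff [Field K] {c : K} (hc : c ≠ 0) (A Ω : Matrix m m K) :
    Aᵀ * (c • Ω) * A = c • Ω ↔ Aᵀ * Ω * A = Ω := by
  rw [Matrix.mul_smul, Matrix.smul_mul, smul_right_inj hc]

lemma eq_one_of_det_eq_one_of_unique [Unique n] [DecidableEq n] [CommRing K] {D : Matrix n n K}
    (h : D.det = 1) : D = 1 := by
  ext i j
  rw [Subsingleton.elim i default, Subsingleton.elim j default, one_apply_eq, ← h, det_unique]

variable [DecidableEq ι] [DecidableEq m] [DecidableEq n] [CommRing K] [StarRing K]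

lemma map_star_mul_transpose_eq_one {U : Matrix ι ι K} (hU : U ∈ unitaryGroup ι K) :
    U.map star * Uᵀ = 1 := by
  have h := congrArg transpose (mem_unitaryGroup_iff.mp hU)
  rwa [transpose_mul, star_eq_conjTranspose, conjTranspose, transpose_map, transpose_transpose,
    transpose_one] at h

lemma mul_eq_map_star_mul_of_transpose_mul_mul_eq {U Ω : Matrix ι ι K}
    (hU : U ∈ unitaryGroup ι K) (h : Uᵀ * Ω * U = Ω) : Ω * U = U.map star * Ω :=
  calc Ω * U = U.map star * Uᵀ * Ω * U := by rw [map_star_mul_transpose_eq_one hU, Matrix.one_mul]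
    _ = U.map star * Ω := by rw [Matrix.mul_assoc, Matrix.mul_assoc, ← Matrix.mul_assoc Uᵀ, h]

lemma fromBlocks_mem_unitaryGroup_iff {A : Matrix m m K} {D : Matrix n n K} :
    fromBlocks A 0 0 D ∈ unitaryGroup (m ⊕ n) K ↔
      A ∈ unitaryGroup m K ∧ D ∈ unitaryGroup n K := by
  simp [mem_unitaryGroup_iff', star_eq_conjTranspose, fromBlocks_conjTranspose,
    fromBlocks_multiply, ← fromBlocks_one]

lemma exists_eq_fromBlocks_of_transpose_mul_mul_eq {Ω : Matrix m m K} (hΩ : IsUnit Ω.det)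
    {W : Matrix (m ⊕ n) (m ⊕ n) K} (hW : W ∈ unitaryGroup (m ⊕ n) K)
    (h : Wᵀ * fromBlocks Ω 0 0 0 * W = fromBlocks Ω 0 0 0) :
    ∃ A D, W = fromBlocks A 0 0 D := by
  have key := mul_eq_map_star_mul_of_transpose_mul_mul_eq hW h
  rw [← fromBlocks_toBlocks W] at key
  simp only [fromBlocks_map, fromBlocks_multiply, fromBlocks_inj, Matrix.zero_mul, Matrix.mul_zero,
    add_zero] at key
  obtain ⟨-, hB, hC, -⟩ := key
  have hB' : W.toBlocks₁₂ = 0 := by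
    simpa [nonsing_inv_mul_cancel_left _ _ hΩ] using congrArg (Ω⁻¹ * ·) hB
  have hC' : W.toBlocks₂₁ = 0 := by
    have hC_map := congrArg (· * Ω⁻¹) hC.symm
    simp only [mul_nonsing_inv_cancel_right _ _ hΩ, Matrix.zero_mul] at hC_map
    ext i j
    simpa using congrFun (congrFun hC_map i) j
  exact ⟨W.toBlocks₁₁, W.toBlocks₂₂, by simpa [hB', hC'] using (fromBlocks_toBlocks W).symm⟩

end Blocks

end Matrix

lemma J4_eq_reindex_J : ∃ e : Fin 2 ⊕ Fin 2 ≃ Fin 4, J4 = reindex e e (J (Fin 2) ℂ) := by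
  -- `J` pairs `inl i` with `inr i`; `J4` pairs `0` with `1` and `2` with `3`.
  let f : Fin 4 ≃ Fin 2 ⊕ Fin 2 :=
    { toFun := ![.inr 0, .inl 0, .inr 1, .inl 1]
      invFun := Sum.elim ![1, 3] ![0, 2]
      left_inv := by decide
      right_inv := by decide }
  refine ⟨f.symm, ?_⟩
  ext i j
  fin_cases i <;> fin_cases j <;> simp [J4, J, f]

lemma det_eq_one_of_transpose_mul_J4_mul_eq {V : Matrix (Fin 4) (Fin 4) ℂ}
    (h : Vᵀ * J4 * V = J4) : V.det = 1 := by
  obtain ⟨e, he⟩ := J4_eq_reindex_J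
  rw [he] at h
  exact det_eq_one_of_transpose_mul_reindex_J_mul_eq e h

lemma isUnit_det_J4 : IsUnit J4.det := by
  obtain ⟨e, he⟩ := J4_eq_reindex_J
  rw [he, det_reindex_self]
  exact isUnit_det_J _ _

local notation "e₄₁" => (finSumFinEquiv : Fin 4 ⊕ Fin 1 ≃ Fin 5)

lemma blockDiag41_eq_reindex (V : Matrix (Fin 4) (Fin 4) ℂ) :
    blockDiag41 V = reindex e₄₁ e₄₁ (fromBlocks V 0 0 1) := by
  rw [← Equiv.symm_apply_eq, reindex_symm]
  ext (i | i) (j | j) <;> simp [blockDiag41, finSumFinEquiv, Fin.fin_one_eq_zero]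

lemma sigmaForm_self_eq_reindex (lam : ℝ) :
    sigmaForm lam lam = reindex e₄₁ e₄₁ (fromBlocks ((lam : ℂ) • J4) 0 0 0) := by
  rw [← Equiv.symm_apply_eq, reindex_symm]
  ext (i | i) (j | j) <;> fin_cases i <;> fin_cases j <;>
    simp [sigmaForm, J4, single, Fin.ext_iff, finSumFinEquiv]

/-- for `λ ≠ 0`, the stabilizer of `σ(λ, λ)` in `SU(5)` under the congruence
action consists exactly of the block-diagonal matrices `diag(V, 1)` with `V` a `4×4`
unitary matrix satisfying `Vᵀ J V = J`; i.e. it is the compact symplectic group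
`Sp(2) = U(4) ∩ Sp(4, ℂ)`. -/
theorem stabilizer_sigma_sp2 (lam : ℝ) (hlam : lam ≠ 0) :
    ∀ U : Matrix (Fin 5) (Fin 5) ℂ,
      (U ∈ Matrix.specialUnitaryGroup (Fin 5) ℂ ∧
          Uᵀ * sigmaForm lam lam * U = sigmaForm lam lam) ↔
        ∃ V : Matrix (Fin 4) (Fin 4) ℂ,
          V ∈ Matrix.unitaryGroup (Fin 4) ℂ ∧ Vᵀ * J4 * V = J4 ∧ U = blockDiag41 V := by
  have hlam' : (lam : ℂ) ≠ 0 := Complex.ofReal_ne_zero.mpr hlam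
  have hΩ : IsUnit ((lam : ℂ) • J4).det := by
    rw [det_smul]
    exact (hlam'.isUnit.pow _).mul isUnit_det_J4
  intro U
  obtain ⟨W, rfl⟩ := (reindex e₄₁ e₄₁).surjective U
  simp only [sigmaForm_self_eq_reindex, blockDiag41_eq_reindex, transpose_reindex_mul_mul,
    mem_specialUnitaryGroup_iff, reindex_mem_unitaryGroup_iff, det_reindex_self,
    (reindex e₄₁ e₄₁).injective.eq_iff]
  constructor
  · rintro ⟨⟨hW, hdet⟩, hstab⟩
    obtain ⟨A, D, rfl⟩ := exists_eq_fromBlocks_of_transpose_mul_mul_eq hΩ hW hstab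
    rw [transpose_fromBlocks_mul_fromBlocks_mul_fromBlocks, fromBlocks_inj,
      transpose_mul_smul_mul_eq_smul_iff hlam'] at hstab
    obtain ⟨hAJ, -⟩ := hstab
    rw [det_fromBlocks_zero₂₁, det_eq_one_of_transpose_mul_J4_mul_eq hAJ, one_mul] at hdet
    have hD : D = 1 := eq_one_of_det_eq_one_of_unique hdet
    exact ⟨A, (fromBlocks_mem_unitaryGroup_iff.mp hW).1, hAJ, by rw [hD]⟩
  · rintro ⟨V, hV, hJ, rfl⟩
    refine ⟨⟨fromBlocks_mem_unitaryGroup_iff.mpr ⟨hV, one_mem _⟩, ?_⟩, ?_⟩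
    · rw [det_fromBlocks_zero₂₁, det_eq_one_of_transpose_mul_J4_mul_eq hJ, det_one, one_mul]
    · rw [transpose_fromBlocks_mul_fromBlocks_mul_fromBlocks,
        (transpose_mul_smul_mul_eq_smul_iff hlam' V J4).mpr hJ]
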